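/- arXiv:1302.1727 — 2 statements merged into one kernel-verified Lean document; each statement's English description precedes it below -/
import Mathlib

section
/- Let p ∈ [0, 1/2]. For every connected simple graph g on n ≥ 2 vertices, the performance measure of the complete graph on n vertices is at least that of g; that is, μ(K_n) ≥ μ(g), where μ(g) = H(g)·K(g), K(g) = n(n−1)/T(g), T(g) is the sum of the geodesic (shortest-path) distances over all ordered pairs of vertices of g, H(g) = (1/n)·Σ_{i∈V} u_i, and u_i = 1 − (p·d_i + 1)/n with d_i the degree of vertex i in g. -/
open SimpleGraph Finset
open scoped Classical

/-- Total distance: sum of geodesic distances over all ordered pairs of vertices. -/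
noncomputable def totalDist {n : ℕ} (g : SimpleGraph (Fin n)) : ℕ :=
  ∑ i : Fin n, ∑ j : Fin n, g.dist i j

/-- Information measure K(g) = n(n-1)/T(g). -/
noncomputable def infoMeasure {n : ℕ} (g : SimpleGraph (Fin n)) : ℝ :=
  ((n : ℝ) * ((n : ℝ) - 1)) / (totalDist g : ℝ)

/-- Secrecy measure H(g) = (1/n) Σ_i u_i with u_i = 1 - (p d_i + 1)/n. -/
noncomputable def secrecy {n : ℕ} (g : SimpleGraph (Fin n)) (p : ℝ) : ℝ :=
  (1 / (n : ℝ)) * ∑ i : Fin n, (1 - (p * (g.degree i : ℝ) + 1) / (n : ℝ))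

/-- Performance measure μ(g) = H(g) · K(g). -/
noncomputable def perf {n : ℕ} (g : SimpleGraph (Fin n)) (p : ℝ) : ℝ :=
  secrecy g p * infoMeasure g

/-- Star graph on `Fin n`: vertex 0 adjacent to all others, no other edges. -/
def starGraph (n : ℕ) : SimpleGraph (Fin n) where
  Adj i j := i ≠ j ∧ ((i : ℕ) = 0 ∨ (j : ℕ) = 0)
  symm := ⟨fun i j h => ⟨h.1.symm, h.2.symm⟩⟩
  loopless := ⟨fun i h => h.1 rfl⟩

/-!
Write `A = n(n-1)` and `S = Σ dᵢ`. Then `H(g) = (A - pS)/n²` and `K(g) = A/T(g)`. In a connected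
graph the `S` ordered adjacent pairs are at distance 1 and the other `A - S` ordered pairs of
distinct vertices at distance at least 2, so `T(g) ≥ 2A - S`. Hence
`μ(g) ≤ (A/n²) · (A - pS)/(2A - S) ≤ (A/n²)(1 - p) = μ(Kₙ)`, the last step because
`(1 - p)(2A - S) - (A - pS) = (1 - 2p)(A - S) ≥ 0`.
-/

namespace SimpleGraph

variable {V : Type*} {G : SimpleGraph V}

lemma Connected.two_le_dist_add_ite_adj (hG : G.Connected) {u v : V} (huv : u ≠ v) :
    2 ≤ G.dist u v + if G.Adj u v then 1 else 0 := by
  by_cases hadj : G.Adj u v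
  · simp [hadj, dist_eq_one_iff_adj.mpr hadj]
  · have hpos := hG.pos_dist_of_ne huv
    have hne : G.dist u v ≠ 1 := mt dist_eq_one_iff_adj.mp hadj
    simp only [hadj, if_false]
    omega

variable [Fintype V]

lemma Connected.two_mul_card_sub_one_le_sum_dist_add_degree (hG : G.Connected) (u : V) :
    2 * (Fintype.card V - 1) ≤ ∑ v, G.dist u v + G.degree u := by
  have hdist : ∑ v ∈ univ.erase u, G.dist u v = ∑ v, G.dist u v := sum_erase _ dist_self
  have hdeg : ∑ v ∈ univ.erase u, (if G.Adj u v then 1 else 0) = G.degree u := by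
    rw [sum_erase _ (by simp), sum_boole, ← card_neighborFinset_eq_degree,
      neighborFinset_eq_filter, Nat.cast_id]
  calc 2 * (Fintype.card V - 1) = ∑ v ∈ univ.erase u, 2 := by
        simp [card_erase_of_mem, mul_comm]
    _ ≤ ∑ v ∈ univ.erase u, (G.dist u v + if G.Adj u v then 1 else 0) :=
        sum_le_sum fun v hv => hG.two_le_dist_add_ite_adj (ne_of_mem_erase hv).symm
    _ = ∑ v, G.dist u v + G.degree u := by rw [sum_add_distrib, hdist, hdeg]

lemma sum_degree_le_card_mul_card_sub_one :
    ∑ v, G.degree v ≤ Fintype.card V * (Fintype.card V - 1) := by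
  simpa [mul_comm] using sum_le_card_nsmul univ _ _ fun v _ =>
    Nat.le_sub_one_of_lt (G.degree_lt_card_verts v)

lemma degree_top (v : V) [Fintype ((⊤ : SimpleGraph V).neighborSet v)] :
    (⊤ : SimpleGraph V).degree v = Fintype.card V - 1 := by
  convert complete_graph_degree v

lemma sum_dist_top (u : V) : ∑ v, (⊤ : SimpleGraph V).dist u v = Fintype.card V - 1 := by
  simp [dist_top, sum_ite, filter_ne]

end SimpleGraph

section

variable {n : ℕ}

lemma totalDist_top : totalDist (⊤ : SimpleGraph (Fin n)) = n * (n - 1) := by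
  simp [totalDist, sum_dist_top]

lemma two_mul_card_mul_sub_one_le_totalDist_add_sum_degree {g : SimpleGraph (Fin n)}
    (hg : g.Connected) : 2 * (n * (n - 1)) ≤ totalDist g + ∑ i, g.degree i := by
  calc 2 * (n * (n - 1)) = ∑ _i : Fin n, 2 * (n - 1) := by simp; ring
    _ ≤ ∑ i, (∑ j, g.dist i j + g.degree i) := sum_le_sum fun i _ => by
        simpa using hg.two_mul_card_sub_one_le_sum_dist_add_degree i
    _ = totalDist g + ∑ i, g.degree i := sum_add_distrib

lemma secrecy_eq (g : SimpleGraph (Fin n)) (p : ℝ) :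
    secrecy g p = ((n : ℝ) * (n - 1) - p * ∑ i, (g.degree i : ℝ)) / (n : ℝ) ^ 2 := by
  rcases Nat.eq_zero_or_pos n with rfl | hn
  · simp [secrecy]
  · simp only [secrecy, sum_sub_distrib, ← sum_div, sum_add_distrib, ← mul_sum, sum_const,
      card_univ, Fintype.card_fin, nsmul_eq_mul]
    field_simp
    ring

lemma perf_top (p : ℝ) :
    perf (⊤ : SimpleGraph (Fin n)) p = (1 - p) * ((n : ℝ) * (n - 1)) / (n : ℝ) ^ 2 := by
  rcases Nat.lt_or_ge n 2 with hn | hn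
  · interval_cases n <;> simp [perf, secrecy, infoMeasure]
  · have hA : (n : ℝ) * (n - 1) ≠ 0 := by
      have : (2 : ℝ) ≤ n := by exact_mod_cast hn
      nlinarith
    simp only [perf, secrecy_eq, infoMeasure, totalDist_top, degree_top, Fintype.card_fin,
      sum_const, card_univ, nsmul_eq_mul]
    push_cast [show 1 ≤ n by omega]
    field_simp

end

lemma div_le_one_sub_of_two_mul_sub_le {A S T p : ℝ} (hS : 0 ≤ S) (hSA : S ≤ A)
    (hT : 2 * A - S ≤ T) (hp : p ≤ 1 / 2) : (A - p * S) / T ≤ 1 - p := by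
  refine div_le_of_le_mul₀ (by linarith) (by linarith) ?_
  nlinarith [mul_nonneg (by linarith : (0 : ℝ) ≤ 1 - 2 * p) (sub_nonneg.mpr hSA)]

theorem complete_graph_optimal_general {n : ℕ} (p : ℝ)
    (hp1 : p ≤ 1 / 2)
    (g : SimpleGraph (Fin n)) (hg : g.Connected) :
    perf (⊤ : SimpleGraph (Fin n)) p ≥ perf g p := by
  have hn : 1 ≤ n := Fin.pos_iff_nonempty.mpr hg.nonempty
  set A : ℝ := n * (n - 1)
  set S : ℝ := ∑ i, (g.degree i : ℝ)
  have hS : 0 ≤ S := by positivity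
  have hSA : S ≤ A := by
    have := sum_degree_le_card_mul_card_sub_one (G := g)
    rw [Fintype.card_fin] at this
    have := (Nat.cast_le (α := ℝ)).mpr this
    push_cast [hn] at this
    exact this
  have hT : 2 * A - S ≤ totalDist g := by
    have := (Nat.cast_le (α := ℝ)).mpr (two_mul_card_mul_sub_one_le_totalDist_add_sum_degree hg)
    push_cast [hn] at this
    linarith
  rw [ge_iff_le, perf_top, perf, secrecy_eq, infoMeasure]
  calc (A - p * S) / (n : ℝ) ^ 2 * (A / totalDist g)
      = A / (n : ℝ) ^ 2 * ((A - p * S) / totalDist g) := by ring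
    _ ≤ A / (n : ℝ) ^ 2 * (1 - p) :=
      mul_le_mul_of_nonneg_left (div_le_one_sub_of_two_mul_sub_le hS hSA hT hp1)
        (div_nonneg (hS.trans hSA) (sq_nonneg _))
    _ = (1 - p) * A / (n : ℝ) ^ 2 := by ring

/-- for p ∈ [0,1/2], the complete graph is optimal among connected
graphs on n ≥ 2 vertices. -/
theorem complete_graph_optimal {n : ℕ} (hn : 2 ≤ n) (p : ℝ)
    (hp0 : 0 ≤ p) (hp1 : p ≤ 1 / 2)
    (g : SimpleGraph (Fin n)) (hg : g.Connected) :
    perf (⊤ : SimpleGraph (Fin n)) p ≥ perf g p :=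
  complete_graph_optimal_general p hp1 g hg
end

section
/- Let p ∈ [1/2, 1]. For every connected simple graph g on n ≥ 2 vertices, the performance measure of the star graph on n vertices is at least that of g; that is, μ(S_n) ≥ μ(g), where μ(g) = H(g)·K(g), K(g) = n(n−1)/T(g), T(g) is the sum of the geodesic (shortest-path) distances over all ordered pairs of vertices of g, H(g) = (1/n)·Σ_{i∈V} u_i, and u_i = 1 − (p·d_i + 1)/n with d_i the degree of vertex i in g. -/
/-!
An adjacent pair of vertices is at distance 1 and any other pair of distinct vertices at distance
at least 2, so `T(g) ≥ 2n(n-1) - D` for the degree sum `D = Σ dᵢ`, with equality when `g` has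
diameter at most 2, as `S_n` does. Since `μ(S_n) = (n - 2p)/(2n)`, the claim `μ(g) ≤ μ(S_n)`
amounts to `2(n-1)(n(n-1) - pD) ≤ (n - 2p) T(g)`; as `n ≥ 2p`, `T(g)` may be replaced by its
lower bound, and the difference becomes `n(2p - 1)(D - 2(n-1)) ≥ 0`, because a connected graph
has at least `n - 1` edges.
-/

open SimpleGraph Finset
open scoped Classical

namespace SimpleGraph

variable {V : Type*} {G : SimpleGraph V}

lemma dist_starGraph_le_two (r u v : V) : (starGraph r).dist u v ≤ 2 := by
  have h : ∀ w, (starGraph r).dist w r ≤ 1 := fun w ↦ by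
    rcases eq_or_ne w r with rfl | hw
    · simp
    · exact (dist_eq_one_iff_adj.2 (starGraph_center_adj' hw.symm)).le
  calc (starGraph r).dist u v ≤ (starGraph r).dist u r + (starGraph r).dist r v :=
        (connected_starGraph r).dist_triangle
    _ ≤ 1 + 1 := add_le_add (h u) (dist_comm ▸ h v)

section DegreeSum

variable [Fintype V] [DecidableRel G.Adj]

lemma Connected.two_mul_card_sub_one_le_sum_degree (hG : G.Connected) :
    2 * (Fintype.card V - 1) ≤ ∑ v, G.degree v := by
  have h := hG.card_vert_le_card_edgeSet_add_one
  rw [Nat.card_eq_fintype_card, Nat.card_eq_fintype_card, ← edgeFinset_card] at h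
  rw [sum_degrees_eq_twice_card_edges]
  omega

lemma IsTree.sum_degree_eq (hG : G.IsTree) :
    ∑ v, G.degree v = 2 * (Fintype.card V - 1) := by
  rw [sum_degrees_eq_twice_card_edges, ← hG.card_edgeFinset, Nat.add_sub_cancel]

lemma sum_sum_dist_add_sum_degree :
    ∑ u, ∑ v, G.dist u v + ∑ u, G.degree u
      = ∑ u, ∑ v, (G.dist u v + if G.Adj u v then 1 else 0) := by
  simp only [sum_add_distrib, degree, neighborFinset_eq_filter, card_filter]

end DegreeSum

variable [DecidableEq V] [DecidableRel G.Adj]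

lemma Connected.ite_eq_le_dist_add_ite_adj (hG : G.Connected) (u v : V) :
    (if u = v then 0 else 2) ≤ G.dist u v + if G.Adj u v then 1 else 0 := by
  by_cases huv : u = v
  · simp [huv]
  by_cases hadj : G.Adj u v
  · simp [huv, hadj, dist_eq_one_iff_adj.2 hadj]
  · simp only [huv, hadj, if_false, add_zero]
    exact hG.one_lt_dist_of_ne_of_not_adj huv hadj

lemma Connected.dist_add_ite_adj_eq_ite_eq (hG : G.Connected) {u v : V} (h2 : G.dist u v ≤ 2) :
    G.dist u v + (if G.Adj u v then 1 else 0) = if u = v then 0 else 2 := by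
  by_cases huv : u = v
  · simp [huv]
  by_cases hadj : G.Adj u v
  · simp [huv, hadj, dist_eq_one_iff_adj.2 hadj]
  · simpa [huv, hadj] using le_antisymm h2 (hG.one_lt_dist_of_ne_of_not_adj huv hadj)

variable [Fintype V]

lemma sum_sum_ite_eq_two_mul :
    ∑ u : V, ∑ v : V, (if u = v then 0 else 2) = 2 * (Fintype.card V * (Fintype.card V - 1)) := by
  simp only [sum_ite, sum_const_zero, zero_add, sum_const, filter_ne, mem_univ, card_erase_of_mem,
    card_univ, smul_eq_mul]
  ring

lemma Connected.two_mul_le_sum_sum_dist_add_sum_degree (hG : G.Connected) :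
    2 * (Fintype.card V * (Fintype.card V - 1)) ≤ ∑ u, ∑ v, G.dist u v + ∑ u, G.degree u := by
  rw [← sum_sum_ite_eq_two_mul, sum_sum_dist_add_sum_degree]
  gcongr with u _ v _
  exact hG.ite_eq_le_dist_add_ite_adj u v

lemma Connected.sum_sum_dist_add_sum_degree_of_dist_le_two (hG : G.Connected)
    (h2 : ∀ u v, G.dist u v ≤ 2) :
    ∑ u, ∑ v, G.dist u v + ∑ u, G.degree u = 2 * (Fintype.card V * (Fintype.card V - 1)) := by
  rw [← sum_sum_ite_eq_two_mul, sum_sum_dist_add_sum_degree]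
  exact sum_congr rfl fun u _ ↦ sum_congr rfl fun v _ ↦ hG.dist_add_ite_adj_eq_ite_eq (h2 u v)

end SimpleGraph

lemma starGraph_eq_starGraph_zero (n : ℕ) [NeZero n] :
    _root_.starGraph n = SimpleGraph.starGraph 0 := by
  ext i j
  simp only [_root_.starGraph, SimpleGraph.starGraph_adj, Fin.ext_iff, Fin.val_zero]

lemma isTree_starGraph_fin (n : ℕ) [NeZero n] : (_root_.starGraph n).IsTree := by
  rw [starGraph_eq_starGraph_zero]
  exact isTree_starGraph 0

lemma dist_starGraph_fin_le_two (n : ℕ) [NeZero n] (i j : Fin n) :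
    (_root_.starGraph n).dist i j ≤ 2 := by
  rw [starGraph_eq_starGraph_zero]
  exact dist_starGraph_le_two 0 i j

/-- `μ` in terms of the order `N`, the degree sum `D` and the total distance `T`. -/
noncomputable def perfFormula (N p D T : ℝ) : ℝ :=
  (N * (N - 1) - p * D) / N ^ 2 * (N * (N - 1) / T)

lemma perf_eq_perfFormula {n : ℕ} (g : SimpleGraph (Fin n)) (p : ℝ) :
    perf g p = perfFormula n p (∑ i, (g.degree i : ℝ)) (totalDist g) := by
  rcases Nat.eq_zero_or_pos n with rfl | hn
  · simp [perf, perfFormula, secrecy]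
  have hn0 : (n : ℝ) ≠ 0 := by positivity
  rw [perf, perfFormula, infoMeasure, secrecy, sum_sub_distrib, ← sum_div, sum_add_distrib,
    ← mul_sum]
  simp only [sum_const, card_univ, Fintype.card_fin, nsmul_eq_mul, mul_one]
  field_simp
  ring

lemma perfFormula_le {N p D T : ℝ} (hN : 2 ≤ N) (hp0 : 1 / 2 ≤ p) (hp1 : p ≤ 1)
    (hD : 2 * (N - 1) ≤ D) (hT : 2 * (N * (N - 1)) ≤ T + D) (hT0 : 0 ≤ T) :
    perfFormula N p D T ≤ (N - 2 * p) / (2 * N) := by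
  rcases hT0.eq_or_lt with rfl | hT0
  · simp only [perfFormula, div_zero, mul_zero]
    exact div_nonneg (by linarith) (by linarith)
  rw [perfFormula, div_mul_div_comm, div_le_div_iff₀ (by positivity) (by positivity)]
  have h1 : 0 ≤ (N - 2 * p) * (T + D - 2 * (N * (N - 1))) :=
    mul_nonneg (by linarith) (by linarith)
  have h2 : 0 ≤ (2 * p - 1) * (D - 2 * (N - 1)) := mul_nonneg (by linarith) (by linarith)
  have hN0 : 0 ≤ N ^ 2 := by positivity
  nlinarith [mul_nonneg hN0 h1, mul_nonneg hN0 h2]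

lemma perfFormula_eq {N p D T : ℝ} (hN : 2 ≤ N) (hD : D = 2 * (N - 1))
    (hT : T + D = 2 * (N * (N - 1))) :
    perfFormula N p D T = (N - 2 * p) / (2 * N) := by
  have hN0 : N ≠ 0 := by linarith
  have hN1 : N - 1 ≠ 0 := by linarith
  obtain rfl : T = 2 * (N - 1) ^ 2 := by rw [hD] at hT; linarith
  rw [perfFormula, hD]
  field_simp

lemma perf_le_of_connected {n : ℕ} (hn : 2 ≤ n) {p : ℝ} (hp0 : 1 / 2 ≤ p) (hp1 : p ≤ 1)
    {g : SimpleGraph (Fin n)} (hg : g.Connected) :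
    perf g p ≤ (n - 2 * p) / (2 * n) := by
  have : 1 ≤ n := by omega
  have hD := hg.two_mul_card_sub_one_le_sum_degree
  have hT := hg.two_mul_le_sum_sum_dist_add_sum_degree
  simp only [Fintype.card_fin] at hD hT
  rw [perf_eq_perfFormula]
  refine perfFormula_le (by exact_mod_cast hn) hp0 hp1 ?_ ?_ (Nat.cast_nonneg _)
  · exact_mod_cast hD
  · exact_mod_cast hT

lemma perf_starGraph {n : ℕ} (hn : 2 ≤ n) (p : ℝ) :
    perf (_root_.starGraph n) p = (n - 2 * p) / (2 * n) := by
  have : NeZero n := ⟨by omega⟩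
  have : 1 ≤ n := by omega
  have hD := (isTree_starGraph_fin n).sum_degree_eq
  have hT := (isTree_starGraph_fin n).1.sum_sum_dist_add_sum_degree_of_dist_le_two
    (dist_starGraph_fin_le_two n)
  simp only [Fintype.card_fin] at hD hT
  rw [perf_eq_perfFormula]
  exact perfFormula_eq (by exact_mod_cast hn) (by exact_mod_cast hD) (by exact_mod_cast hT)

/-- for p ∈ [1/2,1], the star graph is optimal among connected
graphs on n ≥ 2 vertices. -/
theorem star_graph_optimal {n : ℕ} (hn : 2 ≤ n) (p : ℝ)
    (hp0 : 1 / 2 ≤ p) (hp1 : p ≤ 1)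
    (g : SimpleGraph (Fin n)) (hg : g.Connected) :
    perf (starGraph n) p ≥ perf g p :=
  (perf_starGraph hn p).symm ▸ perf_le_of_connected hn hp0 hp1 hg
end
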